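/- arXiv:2002.01458 — 3 statements merged into one kernel-verified Lean document; each statement's English description precedes it below -/
import Mathlib

section
/- Let g : [0,1] → ℝ be continuous, and let f : [0,1] → ℝ be a function whose right-hand derivative exists at every point of [0,1) and equals g there, and such that f is Lipschitz continuous on [0,1]. Then f(1) − f(0) = ∫_0^1 g(s) ds. -/
open MeasureTheory intervalIntegral

/-- If g is continuous on [0,1], f is Lipschitz on [0,1] and has right-hand derivative g(s) at
every s ∈ [0,1), then f(1) − f(0) = ∫₀¹ g(s) ds. -/
theorem stmt3 (f g : ℝ → ℝ) (K : NNReal)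
    (hg : ContinuousOn g (Set.Icc 0 1))
    (hf : LipschitzOnWith K f (Set.Icc 0 1))
    (hderiv : ∀ s ∈ Set.Ico (0 : ℝ) 1, HasDerivWithinAt f (g s) (Set.Ici s) s) :
    f 1 - f 0 = ∫ s in (0 : ℝ)..1, g s := by
  have hg_int : IntervalIntegrable g volume 0 1 :=
    (hg.mono (Set.uIcc_of_le zero_le_one).subset).intervalIntegrable
  refine (integral_eq_sub_of_hasDeriv_right_of_le zero_le_one hf.continuousOn
    (fun s hs => ?_) hg_int).symm
  exact (hderiv s (Set.Ioo_subset_Ico_self hs)).mono Set.Ioi_subset_Ici_self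
end

section
/- Let ℓ ≥ 0 and let (y_k)_{k≥1} be distinct points of ℝ^d with Σ_k (1+|y_k|^ℓ) m₀({y_k}) < ∞ for a probability measure m₀ supported on {y_k}. Let ζ₁, ζ₂, … be i.i.d. with law m₀ and m^N = (1/N)Σ_{i=1}^N δ_{ζ_i}. Then ∫_{ℝ^d}(1+|y|^ℓ)|m^N − m₀|(dy) converges to 0 almost surely as N → ∞. -/
/-!
Against measures carried by the atoms `y k`, the weighted total variation `∫ f d|μ - ν|` with the
finite weight `f x = 1 + ‖x‖ ^ ℓ` is bounded by the `ℓ¹` distance of the sequences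
`k ↦ f (y k) * μ {y k}` and `k ↦ f (y k) * ν {y k}`. By the strong law of large numbers, almost
surely `m^N {y k} → m₀ {y k}` for every `k` and `∫ f dm^N → ∫ f dm₀ < ∞`; Scheffé's lemma for the
counting measure on `ℕ` then sends that `ℓ¹` distance to `0`.
-/

open MeasureTheory ProbabilityTheory ENNReal Filter

/-- Total variation measure of the difference of two (finite) measures. -/
noncomputable def tvMeasure {α : Type*} [MeasurableSpace α] (μ ν : Measure α) : Measure α :=
  (μ - ν) + (ν - μ)

open Topology Set

namespace MeasureTheory

section Discrete

variable {α : Type*} [MeasurableSpace α] [MeasurableSingletonClass α] {y : ℕ → α}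

theorem Measure.sum_smul_dirac_eq_restrict_range (hy : Function.Injective y) (μ : Measure α) :
    Measure.sum (fun k => μ {y k} • Measure.dirac (y k)) = μ.restrict (range y) := by
  have hdisj : Pairwise (Function.onFun Disjoint fun k => ({y k} : Set α)) := fun i j hij =>
    Set.disjoint_singleton.2 (hy.ne hij)
  rw [range_eq_iUnion, Measure.restrict_iUnion hdisj fun k => measurableSet_singleton _]
  simp only [Measure.restrict_singleton]

theorem Measure.sum_smul_dirac_eq_self (hy : Function.Injective y) {μ : Measure α}
    (hμ : μ (range y)ᶜ = 0) : Measure.sum (fun k => μ {y k} • Measure.dirac (y k)) = μ := by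
  rw [Measure.sum_smul_dirac_eq_restrict_range hy]
  exact Measure.restrict_eq_self_of_ae_mem (mem_ae_iff.2 hμ)

theorem lintegral_sum_smul_dirac (w : ℕ → ℝ≥0∞) (f : α → ℝ≥0∞) :
    ∫⁻ x, f x ∂(Measure.sum fun k => w k • Measure.dirac (y k)) = ∑' k, f (y k) * w k := by
  simp only [lintegral_sum_measure, lintegral_smul_measure, lintegral_dirac, smul_eq_mul, mul_comm]

theorem lintegral_eq_tsum_of_measure_compl_range_eq_zero (hy : Function.Injective y)
    {μ : Measure α} (hμ : μ (range y)ᶜ = 0) (f : α → ℝ≥0∞) :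
    ∫⁻ x, f x ∂μ = ∑' k, f (y k) * μ {y k} := by
  conv_lhs => rw [← Measure.sum_smul_dirac_eq_self hy hμ]
  exact lintegral_sum_smul_dirac _ f

theorem Measure.sub_le_sum_smul_dirac (hy : Function.Injective y) {μ : Measure α}
    (hμ : μ (range y)ᶜ = 0) (ν : Measure α) :
    μ - ν ≤ Measure.sum fun k => (μ {y k} - ν {y k}) • Measure.dirac (y k) := by
  refine Measure.sub_le_of_le_add ?_
  calc μ = Measure.sum fun k => μ {y k} • Measure.dirac (y k) :=
        (Measure.sum_smul_dirac_eq_self hy hμ).symm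
    _ ≤ Measure.sum fun k => ((μ {y k} - ν {y k}) + ν {y k}) • Measure.dirac (y k) :=
        Measure.le_iff.2 fun s hs => by
          simp only [Measure.sum_apply _ hs, Measure.smul_apply, smul_eq_mul]
          exact ENNReal.tsum_le_tsum fun k => mul_le_mul_left le_tsub_add _
    _ = (Measure.sum fun k => (μ {y k} - ν {y k}) • Measure.dirac (y k)) +
          ν.restrict (range y) := by
        rw [← Measure.sum_smul_dirac_eq_restrict_range hy, Measure.sum_add_sum]
        simp only [add_smul]
    _ ≤ _ := add_le_add le_rfl Measure.restrict_le_self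

theorem lintegral_tvMeasure_le_tsum (hy : Function.Injective y) {μ ν : Measure α}
    (hμ : μ (range y)ᶜ = 0) (hν : ν (range y)ᶜ = 0) (f : α → ℝ≥0∞) :
    ∫⁻ x, f x ∂(tvMeasure μ ν) ≤
      ∑' k, f (y k) * (μ {y k} - ν {y k}) + ∑' k, f (y k) * (ν {y k} - μ {y k}) := by
  rw [tvMeasure, lintegral_add_measure, ← lintegral_sum_smul_dirac, ← lintegral_sum_smul_dirac]
  exact add_le_add (lintegral_mono' (Measure.sub_le_sum_smul_dirac hy hμ ν) le_rfl)
    (lintegral_mono' (Measure.sub_le_sum_smul_dirac hy hν μ) le_rfl)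

end Discrete

theorem tendsto_lintegral_tsub_add_lintegral_tsub {α : Type*} [MeasurableSpace α]
    {μ : Measure α} {F : ℕ → α → ℝ≥0∞} {f : α → ℝ≥0∞} (hF : ∀ n, Measurable (F n))
    (hf : Measurable f) (hf_fin : ∫⁻ a, f a ∂μ ≠ ∞)
    (h_lim : ∀ᵐ a ∂μ, Tendsto (fun n => F n a) atTop (𝓝 (f a)))
    (h_int : Tendsto (fun n => ∫⁻ a, F n a ∂μ) atTop (𝓝 (∫⁻ a, f a ∂μ))) :
    Tendsto (fun n => ∫⁻ a, (F n a - f a) ∂μ + ∫⁻ a, (f a - F n a) ∂μ) atTop (𝓝 0) := by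
  have hmin_meas : ∀ n, Measurable fun a => min (F n a) (f a) := fun n => (hF n).min hf
  have hmin_fin : ∀ n, ∫⁻ a, min (F n a) (f a) ∂μ ≠ ∞ := fun n =>
    ne_top_of_le_ne_top hf_fin (lintegral_mono fun a => min_le_right _ _)
  have hmin : Tendsto (fun n => ∫⁻ a, min (F n a) (f a) ∂μ) atTop (𝓝 (∫⁻ a, f a ∂μ)) :=
    tendsto_lintegral_of_dominated_convergence f hmin_meas
      (fun n => ae_of_all _ fun a => min_le_right _ _) hf_fin
      (h_lim.mono fun a ha => by simpa using ha.min (tendsto_const_nhds (x := f a)))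
  -- `a - b = a - min a b` turns both integrands into differences of convergent integrals
  have hsplit : ∀ n, ∫⁻ a, (F n a - f a) ∂μ + ∫⁻ a, (f a - F n a) ∂μ =
      (∫⁻ a, F n a ∂μ - ∫⁻ a, min (F n a) (f a) ∂μ) +
        (∫⁻ a, f a ∂μ - ∫⁻ a, min (F n a) (f a) ∂μ) := fun n => by
    have hF_sub : ∫⁻ a, (F n a - f a) ∂μ = ∫⁻ a, (F n a - min (F n a) (f a)) ∂μ := by
      simp_rw [tsub_min]
    have hf_sub : ∫⁻ a, (f a - F n a) ∂μ = ∫⁻ a, (f a - min (F n a) (f a)) ∂μ := by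
      simp_rw [min_comm (F n _), tsub_min]
    rw [hF_sub, hf_sub,
      lintegral_sub (hmin_meas n) (hmin_fin n) (ae_of_all _ fun a => min_le_left _ _),
      lintegral_sub (hmin_meas n) (hmin_fin n) (ae_of_all _ fun a => min_le_right _ _)]
  simp_rw [hsplit]
  simpa using (ENNReal.Tendsto.sub h_int hmin (Or.inl hf_fin)).add
    (ENNReal.Tendsto.sub tendsto_const_nhds hmin (Or.inl hf_fin))

theorem tendsto_lintegral_tvMeasure_of_tendsto_atoms {α : Type*} [MeasurableSpace α]
    [MeasurableSingletonClass α] {y : ℕ → α} (hy : Function.Injective y) {μ : ℕ → Measure α}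
    {ν : Measure α} (hμ : ∀ N, μ N (range y)ᶜ = 0) (hν : ν (range y)ᶜ = 0) {f : α → ℝ≥0∞}
    (hf : ∀ x, f x ≠ ∞) (hf_fin : ∫⁻ x, f x ∂ν ≠ ∞)
    (h_atoms : ∀ k, Tendsto (fun N => μ N {y k}) atTop (𝓝 (ν {y k})))
    (h_int : Tendsto (fun N => ∫⁻ x, f x ∂(μ N)) atTop (𝓝 (∫⁻ x, f x ∂ν))) :
    Tendsto (fun N => ∫⁻ x, f x ∂(tvMeasure (μ N) ν)) atTop (𝓝 0) := by
  have hcount : ∀ g : ℕ → ℝ≥0∞, ∑' k, g k = ∫⁻ k, g k ∂Measure.count :=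
    fun g => (lintegral_count g).symm
  simp only [lintegral_eq_tsum_of_measure_compl_range_eq_zero hy hν,
    lintegral_eq_tsum_of_measure_compl_range_eq_zero hy (hμ _), hcount] at hf_fin h_int
  have hScheffe := tendsto_lintegral_tsub_add_lintegral_tsub (μ := Measure.count)
    (F := fun N k => f (y k) * μ N {y k}) (fun _ => measurable_of_countable _)
    (measurable_of_countable _) hf_fin
    (ae_of_all _ fun k => ENNReal.Tendsto.const_mul (h_atoms k) (Or.inr (hf _))) h_int
  refine tendsto_of_tendsto_of_tendsto_of_le_of_le tendsto_const_nhds hScheffe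
    (fun _ => zero_le) fun N => ?_
  simpa only [hcount, ENNReal.mul_sub fun _ _ => hf _] using
    lintegral_tvMeasure_le_tsum hy (hμ N) hν f

noncomputable def empiricalMeasure {Ω E : Type*} [MeasurableSpace E] (ζ : ℕ → Ω → E) (N : ℕ)
    (ω : Ω) : Measure E :=
  (N : ℝ≥0∞)⁻¹ • ∑ i ∈ Finset.range N, Measure.dirac (ζ i ω)

section Empirical

variable {Ω E : Type*} [MeasurableSpace E] {ζ : ℕ → Ω → E}

theorem lintegral_empiricalMeasure {f : E → ℝ≥0∞} (hf : Measurable f) (N : ℕ) (ω : Ω) :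
    ∫⁻ x, f x ∂(empiricalMeasure ζ N ω) = (∑ i ∈ Finset.range N, f (ζ i ω)) / N := by
  rw [empiricalMeasure, lintegral_smul_measure, lintegral_finsetSum_measure, smul_eq_mul,
    ENNReal.div_eq_inv_mul]
  simp only [lintegral_dirac' _ hf]

theorem empiricalMeasure_compl_eq_zero {s : Set E} (hs : MeasurableSet s) {ω : Ω}
    (h : ∀ i, ζ i ω ∈ s) (N : ℕ) : empiricalMeasure ζ N ω sᶜ = 0 := by
  simp [empiricalMeasure, Measure.dirac_apply' _ hs.compl, h]

variable [MeasurableSpace Ω] {P : Measure Ω}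

theorem ae_tendsto_lintegral_empiricalMeasure {μ : Measure E} (hζ : ∀ i, Measurable (ζ i))
    (hindep : Pairwise fun i j => IndepFun (ζ i) (ζ j) P) (hlaw : ∀ i, P.map (ζ i) = μ)
    {f : E → ℝ≥0∞} (hf : Measurable f) (hf_top : ∀ x, f x ≠ ∞) (hf_fin : ∫⁻ x, f x ∂μ ≠ ∞) :
    ∀ᵐ ω ∂P, Tendsto (fun N => ∫⁻ x, f x ∂(empiricalMeasure ζ N ω)) atTop
      (𝓝 (∫⁻ x, f x ∂μ)) := by
  set g : E → ℝ := fun x => (f x).toReal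
  have hg : Measurable g := hf.ennreal_toReal
  have hg_int : Integrable g μ := integrable_toReal_of_lintegral_ne_top hf.aemeasurable hf_fin
  have hident : ∀ i, IdentDistrib (ζ i) (ζ 0) P P := fun i =>
    ⟨(hζ i).aemeasurable, (hζ 0).aemeasurable, by rw [hlaw i, hlaw 0]⟩
  have hint : Integrable (g ∘ ζ 0) P := by
    rw [← hlaw 0] at hg_int
    exact hg_int.comp_measurable (hζ 0)
  have hmean : P[g ∘ ζ 0] = ∫ x, g x ∂μ := by
    rw [← hlaw 0, integral_map (hζ 0).aemeasurable hg.aestronglyMeasurable]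
    rfl
  have hlim : ENNReal.ofReal (∫ x, g x ∂μ) = ∫⁻ x, f x ∂μ := by
    rw [ofReal_integral_eq_lintegral_ofReal hg_int (ae_of_all _ fun _ => toReal_nonneg)]
    simp only [g, ENNReal.ofReal_toReal (hf_top _)]
  filter_upwards [strong_law_ae_real (fun i => g ∘ ζ i) hint
    (fun i j hij => (hindep hij).comp hg hg) fun i => (hident i).comp hg] with ω hω
  rw [hmean] at hω
  refine (hlim ▸ (ENNReal.continuous_ofReal.tendsto _).comp hω).congr'
    (eventually_ge_atTop 1 |>.mono fun N hN => ?_)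
  dsimp only [Function.comp_apply, g]
  rw [lintegral_empiricalMeasure hf, ENNReal.ofReal_div_of_pos (by positivity),
    ENNReal.ofReal_natCast, ENNReal.ofReal_sum_of_nonneg fun _ _ => toReal_nonneg]
  simp only [ENNReal.ofReal_toReal (hf_top _)]

theorem ae_tendsto_empiricalMeasure_apply {μ : Measure E} (hζ : ∀ i, Measurable (ζ i))
    (hindep : Pairwise fun i j => IndepFun (ζ i) (ζ j) P) (hlaw : ∀ i, P.map (ζ i) = μ)
    {s : Set E} (hs : MeasurableSet s) (hμs : μ s ≠ ∞) :
    ∀ᵐ ω ∂P, Tendsto (fun N => empiricalMeasure ζ N ω s) atTop (𝓝 (μ s)) := by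
  simpa only [lintegral_indicator_one hs] using
    ae_tendsto_lintegral_empiricalMeasure hζ hindep hlaw (measurable_one.indicator hs)
      (fun x => ne_top_of_le_ne_top one_ne_top (s.indicator_le_self' (fun _ _ => zero_le) x))
      (by rwa [lintegral_indicator_one hs])

end Empirical

end MeasureTheory

theorem stmt16_general {Ω : Type*} [MeasurableSpace Ω] (P : Measure Ω)
    (d : ℕ) (ℓ : ℝ)
    (y : ℕ → EuclideanSpace ℝ (Fin d)) (hy : Function.Injective y)
    (m₀ : Measure (EuclideanSpace ℝ (Fin d))) [IsProbabilityMeasure m₀]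
    (hsupp : m₀ (Set.range y)ᶜ = 0)
    (hmom : (∑' k : ℕ, ENNReal.ofReal (1 + ‖y k‖ ^ ℓ) * m₀ {y k}) ≠ ⊤)
    (ζ : ℕ → Ω → EuclideanSpace ℝ (Fin d)) (hmeas : ∀ i, Measurable (ζ i))
    (hindep : iIndepFun ζ P)
    (hlaw : ∀ i, Measure.map (ζ i) P = m₀)
    (emp : ℕ → Ω → Measure (EuclideanSpace ℝ (Fin d)))
    (hemp : ∀ N ω, emp N ω = (N : ℝ≥0∞)⁻¹ • ∑ i ∈ Finset.range N, Measure.dirac (ζ i ω)) :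
    ∀ᵐ ω ∂P, Tendsto
      (fun N => ∫⁻ x, ENNReal.ofReal (1 + ‖x‖ ^ ℓ) ∂(tvMeasure (emp N ω) m₀))
      atTop (nhds 0) := by
  obtain rfl : emp = empiricalMeasure ζ := funext fun N => funext (hemp N)
  have hpair : Pairwise fun i j => IndepFun (ζ i) (ζ j) P := fun _ _ hij => hindep.indepFun hij
  have hf : Measurable fun x : EuclideanSpace ℝ (Fin d) => ENNReal.ofReal (1 + ‖x‖ ^ ℓ) := by
    fun_prop
  have hf_fin : ∫⁻ x, ENNReal.ofReal (1 + ‖x‖ ^ ℓ) ∂m₀ ≠ ∞ := by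
    rwa [lintegral_eq_tsum_of_measure_compl_range_eq_zero hy hsupp]
  have hrange : MeasurableSet (Set.range y) := (Set.countable_range y).measurableSet
  have h_supp : ∀ i, ∀ᵐ ω ∂P, ζ i ω ∈ Set.range y := fun i =>
    (ae_map_iff (hmeas i).aemeasurable hrange).1 (hlaw i ▸ mem_ae_iff.2 hsupp)
  filter_upwards
    [ae_tendsto_lintegral_empiricalMeasure hmeas hpair hlaw hf (fun _ => ofReal_ne_top) hf_fin,
      ae_all_iff.2 fun k => ae_tendsto_empiricalMeasure_apply hmeas hpair hlaw
        (measurableSet_singleton (y k)) (measure_ne_top m₀ _),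
      ae_all_iff.2 h_supp]
    with ω hω_int hω_atoms hω_supp
  exact tendsto_lintegral_tvMeasure_of_tendsto_atoms hy
    (empiricalMeasure_compl_eq_zero hrange hω_supp) hsupp
    (fun _ => ofReal_ne_top) hf_fin hω_atoms hω_int

/-- For a discrete m₀ ∈ P_ℓ(ℝ^d) supported on distinct points (y_k) with
Σ_k (1+|y_k|^ℓ) m₀({y_k}) < ∞, and i.i.d. ζᵢ with law m₀,
∫ (1+|y|^ℓ) |m^N − m₀|(dy) → 0 almost surely as N → ∞. -/
theorem stmt16 {Ω : Type*} [MeasurableSpace Ω] (P : Measure Ω) [IsProbabilityMeasure P]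
    (d : ℕ) (ℓ : ℝ) (hℓ : 0 ≤ ℓ)
    (y : ℕ → EuclideanSpace ℝ (Fin d)) (hy : Function.Injective y)
    (m₀ : Measure (EuclideanSpace ℝ (Fin d))) [IsProbabilityMeasure m₀]
    (hsupp : m₀ (Set.range y)ᶜ = 0)
    (hmom : (∑' k : ℕ, ENNReal.ofReal (1 + ‖y k‖ ^ ℓ) * m₀ {y k}) ≠ ⊤)
    (ζ : ℕ → Ω → EuclideanSpace ℝ (Fin d)) (hmeas : ∀ i, Measurable (ζ i))
    (hindep : iIndepFun ζ P)
    (hlaw : ∀ i, Measure.map (ζ i) P = m₀)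
    (emp : ℕ → Ω → Measure (EuclideanSpace ℝ (Fin d)))
    (hemp : ∀ N ω, emp N ω = (N : ℝ≥0∞)⁻¹ • ∑ i ∈ Finset.range N, Measure.dirac (ζ i ω)) :
    ∀ᵐ ω ∂P, Tendsto
      (fun N => ∫⁻ x, ENNReal.ofReal (1 + ‖x‖ ^ ℓ) ∂(tvMeasure (emp N ω) m₀))
      atTop (nhds 0) :=
  stmt16_general P d ℓ y hy m₀ hsupp hmom ζ hmeas hindep hlaw emp hemp
end

section
/- Let v ∈ (0,1) and m₀ be a probability measure on ℝ whose restriction to a neighbourhood of its v-quantile x₀ := inf{x : m₀((−∞,x]) ≥ v} admits a positive continuous density p₀. Let ν be a probability measure on ℝ with ν({x₀}) = 0 and set m_ε := m₀ + ε(ν − m₀), x_ε := inf{x : m_ε((−∞,x]) ≥ v}. Then lim_{ε→0^+} (x_ε − x₀)/ε = (m₀ − ν)((−∞, x₀]) / p₀(x₀). -/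
/-!
The `v`-quantile is characterised by the Galois connection `quantile μ v ≤ y ↔ v ≤ cdf μ y`
(right continuity of the distribution function). Hence `x_ε ≤ x₀ + c ε` exactly when
`v ≤ (1 - ε) F₀ (x₀ + c ε) + ε G (x₀ + c ε)`, with `F₀`, `G` the distribution functions of `m₀`, `ν`.
By the fundamental theorem of calculus `F₀' (x₀) = p₀ (x₀)`, and `F₀ (x₀) = v` because `F₀` is
continuous there; as `G` is continuous at `x₀` too, the right-hand side minus `v` is
`ε (p₀ (x₀) c + G (x₀) - v) + o(ε)`. Its sign for `c` on either side of `(v - G (x₀)) / p₀ (x₀)`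
traps `(x_ε - x₀) / ε` near that value.
-/

open MeasureTheory Filter Set ProbabilityTheory Topology

lemma cdf_sub_cdf_eq_integral_of_le (μ : Measure ℝ) [IsProbabilityMeasure μ] {a b : ℝ}
    {p : ℝ → ℝ} (hcont : ContinuousOn p (Ioo a b)) (hnonneg : ∀ x ∈ Ioo a b, 0 ≤ p x)
    (hdens : μ.restrict (Ioo a b) =
      (volume.restrict (Ioo a b)).withDensity (fun x => ENNReal.ofReal (p x)))
    {x y : ℝ} (hx : a < x) (hxy : x ≤ y) (hy : y < b) :
    cdf μ y - cdf μ x = ∫ t in x..y, p t := by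
  have hsub : Icc x y ⊆ Ioo a b := Icc_subset_Ioo hx hy
  have hIoc : Ioc x y ⊆ Ioo a b := Ioc_subset_Icc_self.trans hsub
  have hint : IntegrableOn p (Ioc x y) :=
    ((hcont.mono hsub).integrableOn_Icc).mono_set Ioc_subset_Icc_self
  have hμ : μ (Ioc x y) = ENNReal.ofReal (∫ t in Ioc x y, p t) := by
    rw [ofReal_integral_eq_lintegral_ofReal hint
      ((ae_restrict_iff' measurableSet_Ioc).2 (ae_of_all _ fun t ht => hnonneg t (hIoc ht))),
      ← inter_eq_left.2 hIoc, ← Measure.restrict_apply measurableSet_Ioc, hdens,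
      withDensity_apply _ measurableSet_Ioc, Measure.restrict_restrict measurableSet_Ioc]
  have hcdf := (cdf μ).measure_Ioc x y
  rw [measure_cdf, hμ] at hcdf
  rw [intervalIntegral.integral_of_le hxy, ← ENNReal.ofReal_eq_ofReal_iff
    (sub_nonneg.2 (monotone_cdf μ hxy)) (setIntegral_nonneg measurableSet_Ioc
      fun t ht => hnonneg t (hIoc ht)), hcdf]

lemma hasDerivAt_cdf_of_restrict_eq_withDensity (μ : Measure ℝ) [IsProbabilityMeasure μ]
    {a b : ℝ} {p : ℝ → ℝ} (hcont : ContinuousOn p (Ioo a b))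
    (hnonneg : ∀ x ∈ Ioo a b, 0 ≤ p x)
    (hdens : μ.restrict (Ioo a b) =
      (volume.restrict (Ioo a b)).withDensity (fun x => ENNReal.ofReal (p x)))
    {x : ℝ} (hx : x ∈ Ioo a b) :
    HasDerivAt (cdf μ) (p x) x := by
  have hFTC : HasDerivAt (fun y => cdf μ x + ∫ t in x..y, p t) (p x) x :=
    (intervalIntegral.integral_hasDerivAt_right IntervalIntegrable.refl
      (hcont.stronglyMeasurableAtFilter isOpen_Ioo x hx)
      (hcont.continuousAt (isOpen_Ioo.mem_nhds hx))).const_add _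
  refine hFTC.congr_of_eventuallyEq ?_
  filter_upwards [isOpen_Ioo.mem_nhds hx] with y hy
  rcases le_total x y with hxy | hyx
  · rw [← cdf_sub_cdf_eq_integral_of_le μ hcont hnonneg hdens hx.1 hxy hy.2]
    ring
  · rw [intervalIntegral.integral_symm,
      ← cdf_sub_cdf_eq_integral_of_le μ hcont hnonneg hdens hy.1 hyx hx.2]
    ring

lemma continuousAt_cdf_of_measure_singleton (μ : Measure ℝ) [IsProbabilityMeasure μ] {x : ℝ}
    (h : μ {x} = 0) : ContinuousAt (cdf μ) x := by
  rw [(cdf μ).mono.continuousAt_iff_leftLim_eq_rightLim, (cdf μ).rightLim_eq]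
  have hjump := (cdf μ).measure_singleton x
  rw [measure_cdf, h, eq_comm, ENNReal.ofReal_eq_zero] at hjump
  exact le_antisymm ((cdf μ).mono.leftLim_le le_rfl) (sub_nonpos.1 hjump)

noncomputable def quantile (μ : Measure ℝ) (v : ℝ) : ℝ := sInf {x | v ≤ cdf μ x}

lemma quantile_eq_sInf_measure_Iic (μ : Measure ℝ) [IsProbabilityMeasure μ] (v : ℝ) :
    sInf {x | v ≤ (μ (Iic x)).toReal} = quantile μ v := by
  simp only [quantile, cdf_eq_real, measureReal_def]

lemma quantile_le_iff (μ : Measure ℝ) {v : ℝ} (hv0 : 0 < v) (hv1 : v < 1) (y : ℝ) :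
    quantile μ v ≤ y ↔ v ≤ cdf μ y := by
  have hne : {x | v ≤ cdf μ x}.Nonempty :=
    ((tendsto_cdf_atTop μ).eventually (eventually_ge_nhds hv1)).exists
  have hbdd : BddBelow {x | v ≤ cdf μ x} := by
    obtain ⟨R, hR⟩ := eventually_atBot.1 ((tendsto_cdf_atBot μ).eventually (eventually_lt_nhds hv0))
    exact ⟨R, fun x hx => le_of_not_gt fun hxR => (hR x hxR.le).not_ge hx⟩
  refine ⟨fun h => ?_, csInf_le hbdd⟩
  have hright : ∀ t ∈ Ioi y, v ≤ cdf μ t := fun t ht => by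
    obtain ⟨s, hs, hst⟩ := (csInf_lt_iff hbdd hne).1 (h.trans_lt ht)
    exact hs.trans (monotone_cdf μ hst.le)
  exact ge_of_tendsto ((cdf μ).right_continuous y |>.mono Ioi_subset_Ici_self)
    (eventually_nhdsWithin_of_forall hright)

lemma cdf_quantile_of_continuousAt (μ : Measure ℝ) {v : ℝ} (hv0 : 0 < v) (hv1 : v < 1)
    (hc : ContinuousAt (cdf μ) (quantile μ v)) : cdf μ (quantile μ v) = v := by
  have hleft : ∀ y ∈ Iio (quantile μ v), cdf μ y ≤ v := fun y hy =>
    (not_le.1 fun h => (not_le.2 hy) ((quantile_le_iff μ hv0 hv1 y).2 h)).le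
  exact le_antisymm (le_of_tendsto (hc.mono_left nhdsWithin_le_nhds)
    (eventually_nhdsWithin_of_forall hleft)) ((quantile_le_iff μ hv0 hv1 _).1 le_rfl)

lemma isProbabilityMeasure_mix (μ ν : Measure ℝ) [IsProbabilityMeasure μ]
    [IsProbabilityMeasure ν] {ε : ℝ} (h0 : 0 ≤ ε) (h1 : ε ≤ 1) :
    IsProbabilityMeasure (ENNReal.ofReal (1 - ε) • μ + ENNReal.ofReal ε • ν) := by
  constructor
  simp only [Measure.add_apply, Measure.smul_apply, measure_univ, smul_eq_mul, mul_one]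
  rw [← ENNReal.ofReal_add (sub_nonneg.2 h1) h0, sub_add_cancel, ENNReal.ofReal_one]

lemma cdf_mix (μ ν : Measure ℝ) [IsProbabilityMeasure μ] [IsProbabilityMeasure ν] {ε : ℝ}
    (h0 : 0 ≤ ε) (h1 : ε ≤ 1) (x : ℝ) :
    haveI := isProbabilityMeasure_mix μ ν h0 h1
    cdf (ENNReal.ofReal (1 - ε) • μ + ENNReal.ofReal ε • ν) x
      = (1 - ε) * cdf μ x + ε * cdf ν x := by
  have := isProbabilityMeasure_mix μ ν h0 h1
  simp only [cdf_eq_real, measureReal_def, Measure.add_apply, Measure.smul_apply, smul_eq_mul]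
  rw [ENNReal.toReal_add (by finiteness) (by finiteness), ENNReal.toReal_mul, ENNReal.toReal_mul,
    ENNReal.toReal_ofReal (sub_nonneg.2 h1), ENNReal.toReal_ofReal h0]

lemma tendsto_mix_sub_div {F G : ℝ → ℝ} {p x₀ : ℝ} (hF : HasDerivAt F p x₀)
    (hG : ContinuousAt G x₀) (c : ℝ) :
    Tendsto (fun ε => ((1 - ε) * F (x₀ + c * ε) + ε * G (x₀ + c * ε) - F x₀) / ε) (𝓝[>] 0)
      (𝓝 (p * c + G x₀ - F x₀)) := by
  have hline : HasDerivAt (fun ε : ℝ => x₀ + c * ε) c 0 := by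
    simpa using ((hasDerivAt_id (0 : ℝ)).const_mul c).const_add x₀
  have hslope : Tendsto (fun ε => ε⁻¹ * (F (x₀ + c * ε) - F x₀)) (𝓝[>] 0) (𝓝 (p * c)) := by
    simpa using (hF.comp_of_eq 0 hline (by simp)).tendsto_slope_zero_right
  have hGline : Tendsto (fun ε => G (x₀ + c * ε)) (𝓝[>] 0) (𝓝 (G x₀)) := by
    refine hG.tendsto.comp (tendsto_nhdsWithin_of_tendsto_nhds ?_)
    simpa using hline.continuousAt.tendsto
  have hweight : Tendsto (fun ε : ℝ => 1 - ε) (𝓝[>] 0) (𝓝 1) := by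
    simpa using ((continuous_sub_left (1 : ℝ)).tendsto 0).mono_left nhdsWithin_le_nhds
  have hlim := (hweight.mul hslope).add (hGline.sub (tendsto_const_nhds (x := F x₀)))
  rw [one_mul, ← add_sub_assoc] at hlim
  refine hlim.congr' (eventually_nhdsWithin_of_forall fun ε (hε : 0 < ε) => ?_)
  field_simp
  ring

lemma tendsto_sub_div_of_le_iff_mix {F G q : ℝ → ℝ} {p v x₀ : ℝ} (hp : 0 < p)
    (hF : HasDerivAt F p x₀) (hFx₀ : F x₀ = v) (hG : ContinuousAt G x₀)
    (hq : ∀ᶠ ε in 𝓝[>] 0, ∀ y, q ε ≤ y ↔ v ≤ (1 - ε) * F y + ε * G y) :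
    Tendsto (fun ε => (q ε - x₀) / ε) (𝓝[>] 0) (𝓝 ((v - G x₀) / p)) := by
  subst hFx₀
  refine tendsto_order.2 ⟨fun c hc => ?_, fun c hc => ?_⟩
  · have hneg : p * c + G x₀ - F x₀ < 0 := by
      rw [lt_div_iff₀ hp] at hc
      linarith
    filter_upwards [hq, (tendsto_mix_sub_div hF hG c).eventually (gt_mem_nhds hneg),
      self_mem_nhdsWithin] with ε hqε hslope (hε : 0 < ε)
    rw [div_lt_iff₀ hε, zero_mul, sub_neg] at hslope
    have hlt : x₀ + c * ε < q ε := not_le.1 fun h => (not_le.2 hslope) ((hqε _).1 h)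
    rw [lt_div_iff₀ hε]
    linarith
  · obtain ⟨c', hc', hc'c⟩ := exists_between hc
    have hpos : 0 < p * c' + G x₀ - F x₀ := by
      rw [div_lt_iff₀ hp] at hc'
      linarith
    filter_upwards [hq, (tendsto_mix_sub_div hF hG c').eventually (lt_mem_nhds hpos),
      self_mem_nhdsWithin] with ε hqε hslope (hε : 0 < ε)
    rw [lt_div_iff₀ hε, zero_mul, sub_pos] at hslope
    have hle : q ε ≤ x₀ + c' * ε := (hqε _).2 hslope.le
    rw [div_lt_iff₀ hε]
    nlinarith

/-- Quantile differentiability: if m₀ has a positive continuous density p₀ near its v-quantile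
x₀ and ν({x₀}) = 0, then with m_ε = (1−ε)m₀ + εν and x_ε the v-quantile of m_ε,
(x_ε − x₀)/ε → (m₀ − ν)((−∞,x₀])/p₀(x₀) as ε → 0⁺. -/
theorem stmt17 (v : ℝ) (hv0 : 0 < v) (hv1 : v < 1)
    (m₀ ν : Measure ℝ) [IsProbabilityMeasure m₀] [IsProbabilityMeasure ν]
    (x₀ : ℝ) (hx₀ : x₀ = sInf {x : ℝ | v ≤ (m₀ (Set.Iic x)).toReal})
    (a b : ℝ) (hab : x₀ ∈ Set.Ioo a b)
    (p₀ : ℝ → ℝ) (hcont : ContinuousOn p₀ (Set.Ioo a b))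
    (hpos : ∀ x ∈ Set.Ioo a b, 0 < p₀ x)
    (hdens : m₀.restrict (Set.Ioo a b) =
      (volume.restrict (Set.Ioo a b)).withDensity (fun x => ENNReal.ofReal (p₀ x)))
    (hν : ν {x₀} = 0)
    (xq : ℝ → ℝ)
    (hxq : ∀ ε : ℝ, xq ε = sInf {x : ℝ |
      v ≤ (((ENNReal.ofReal (1 - ε) • m₀ + ENNReal.ofReal ε • ν)) (Set.Iic x)).toReal}) :
    Tendsto (fun ε : ℝ => (xq ε - x₀) / ε) (nhdsWithin 0 (Set.Ioi 0))
      (nhds (((m₀ (Set.Iic x₀)).toReal - (ν (Set.Iic x₀)).toReal) / p₀ x₀)) := by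
  rw [quantile_eq_sInf_measure_Iic] at hx₀
  have hderiv : HasDerivAt (cdf m₀) (p₀ x₀) x₀ :=
    hasDerivAt_cdf_of_restrict_eq_withDensity m₀ hcont (fun x hx => (hpos x hx).le) hdens hab
  have hcdf_x₀ : cdf m₀ x₀ = v := by
    subst hx₀
    exact cdf_quantile_of_continuousAt m₀ hv0 hv1 hderiv.continuousAt
  have hq : ∀ᶠ ε in 𝓝[>] 0, ∀ y, xq ε ≤ y ↔ v ≤ (1 - ε) * cdf m₀ y + ε * cdf ν y := by
    filter_upwards [Ioo_mem_nhdsGT one_pos] with ε ⟨hε0, hε1⟩ y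
    have := isProbabilityMeasure_mix m₀ ν hε0.le hε1.le
    rw [hxq, quantile_eq_sInf_measure_Iic, quantile_le_iff _ hv0 hv1, cdf_mix _ _ hε0.le hε1.le]
  have hlimit : (m₀ (Iic x₀)).toReal - (ν (Iic x₀)).toReal = v - cdf ν x₀ := by
    rw [← hcdf_x₀, cdf_eq_real, cdf_eq_real, measureReal_def, measureReal_def]
  rw [hlimit]
  exact tendsto_sub_div_of_le_iff_mix (hpos x₀ hab) hderiv hcdf_x₀
    (continuousAt_cdf_of_measure_singleton ν hν) hq
end
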